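/- Let (x, p, μ) be a deterministic TFM satisfying weak UIC and 1-weak-SCP. Then for any bid vector b, any user k, and any 0 < Δ ≤ b_k, the miner revenue satisfies μ(b) − Δ ≤ μ(b_{-k}, b_k − Δ) ≤ μ(b). In particular, changing a single bid by Δ changes the miner revenue by at most Δ. -/
import Mathlib


/-- The 1-strict ("weak") utility of a single transaction with true value `v`,
bid `β`, confirmation indicator `conf ∈ {0,1}`, and payment `pay`: a confirmed
transaction yields `v − pay`, while an unconfirmed overbid of amount `β > v`
costs `β − v`. -/
noncomputable def weakUtil (v β conf pay : ℝ) : ℝ :=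
  if conf = 1 then v - pay else -(max (β - v) 0)

/-- The joint 1-strict utility of the coalition of the miner and the users in
`C` (with true values `v`), when the miner mines a block of `n` slots: slot `s`
carries bid `bids s` and is either a real user's transaction
(`owner s = some u`) or a fake transaction of the miner (`owner s = none`,
true value `0`).  The coalition receives the miner revenue, plus the 1-strict
utility of each coalition-owned transaction and of each fake transaction. -/
noncomputable def weakCoalitionUtility
    (x p : (n : ℕ) → (Fin n → ℝ) → Fin n → ℝ)
    (μ : (n : ℕ) → (Fin n → ℝ) → ℝ)
    (m : ℕ) (v : Fin m → ℝ) (C : Finset (Fin m))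
    (n : ℕ) (owner : Fin n → Option (Fin m)) (bids : Fin n → ℝ) : ℝ :=
  μ n bids + ∑ s : Fin n,
    (match owner s with
     | some u => if u ∈ C then weakUtil (v u) (bids s) (x n bids s) (p n bids s)
                 else 0
     | none => weakUtil 0 (bids s) (x n bids s) (p n bids s))

/-- Weak UIC: assuming the miner is honest, truthful bidding maximizes every
individual user's 1-strict utility. -/
def WeakUIC (x p : (n : ℕ) → (Fin n → ℝ) → Fin n → ℝ) : Prop :=
  ∀ (m : ℕ) (b : Fin m → ℝ) (i : Fin m) (r : ℝ),
    weakUtil (b i) r (x m (Function.update b i r) i) (p m (Function.update b i r) i)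
      ≤ weakUtil (b i) (b i) (x m b i) (p m b i)

/-- `c`-weak-SCP: no coalition of the miner and at least one and at most `c`
users can increase its joint 1-strict utility by any deviation — colluding
users bidding untruthfully, the miner injecting fake transactions, or the
miner assembling an arbitrary block (non-coalition users that are included
appear at most once, with their truthful bids). -/
def WeakSCP (c : ℕ)
    (x p : (n : ℕ) → (Fin n → ℝ) → Fin n → ℝ)
    (μ : (n : ℕ) → (Fin n → ℝ) → ℝ) : Prop :=
  ∀ (m : ℕ) (v : Fin m → ℝ) (C : Finset (Fin m)), C.Nonempty → C.card ≤ c →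
    ∀ (n : ℕ) (owner : Fin n → Option (Fin m)) (bids : Fin n → ℝ),
      (∀ s t u, owner s = some u → owner t = some u → s = t) →
      (∀ s u, owner s = some u → u ∉ C → bids s = v u) →
      weakCoalitionUtility x p μ m v C n owner bids
        ≤ weakCoalitionUtility x p μ m v C m (fun s => some s) v

lemma weakUtil_conf {v β conf pay : ℝ} (h : conf = 1) :
    weakUtil v β conf pay = v - pay := by simp [weakUtil, h]

lemma weakUtil_unconf {v β conf pay : ℝ} (h : ¬ conf = 1) (hle : β ≤ v) :
    weakUtil v β conf pay = 0 := by
  simp [weakUtil, h, max_eq_right (by linarith : β - v ≤ 0)]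

lemma weakUtil_unconf' {v β conf pay : ℝ} (h : ¬ conf = 1) :
    weakUtil v β conf pay = -(max (β - v) 0) := by simp [weakUtil, h]

/-- **Miner revenue is 1-Lipschitz in each single bid.**
For a deterministic TFM `(x, p, μ)` satisfying weak UIC and 1-weak-SCP, if user
`k` lowers its bid by `Δ` with `0 < Δ ≤ b k`, the miner revenue does not
increase and decreases by at most `Δ`. -/
theorem weak_uic_scp_revenue_lipschitz
    (x p : (n : ℕ) → (Fin n → ℝ) → Fin n → ℝ)
    (μ : (n : ℕ) → (Fin n → ℝ) → ℝ)
    (hx01 : ∀ n (b : Fin n → ℝ) (i : Fin n), x n b i = 0 ∨ x n b i = 1)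
    (hple : ∀ n (b : Fin n → ℝ) (i : Fin n), x n b i = 1 → p n b i ≤ b i)
    (hp0 : ∀ n (b : Fin n → ℝ) (i : Fin n), x n b i = 0 → p n b i = 0)
    (hμ : ∀ n (b : Fin n → ℝ), 0 ≤ μ n b ∧ μ n b ≤ ∑ i, p n b i)
    (hUIC : WeakUIC x p)
    (hSCP : WeakSCP 1 x p μ) :
    ∀ (m : ℕ) (b : Fin m → ℝ) (k : Fin m) (Δ : ℝ), 0 < Δ → Δ ≤ b k →
      μ m b - Δ ≤ μ m (Function.update b k (b k - Δ)) ∧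
        μ m (Function.update b k (b k - Δ)) ≤ μ m b := by
  intro m b k Δ hΔ hΔb
  have hbb : Function.update b k (b k) = b := Function.update_eq_self k b
  -- UIC specialized to user k with others' bids fixed to `b`.
  have hU : ∀ t r : ℝ,
      weakUtil t r (x m (Function.update b k r) k) (p m (Function.update b k r) k)
        ≤ weakUtil t t (x m (Function.update b k t) k) (p m (Function.update b k t) k) := by
    intro t r
    have h := hUIC m (Function.update b k t) k r
    simpa [Function.update_idem, Function.update_self] using h
  -- SCP specialized to coalition {k}, block = all users, k bidding r, true values upd t.
  have hS : ∀ t r : ℝ,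
      μ m (Function.update b k r) +
          weakUtil t r (x m (Function.update b k r) k) (p m (Function.update b k r) k)
        ≤ μ m (Function.update b k t) +
          weakUtil t t (x m (Function.update b k t) k) (p m (Function.update b k t) k) := by
    intro t r
    have h := hSCP m (Function.update b k t) {k} ⟨k, Finset.mem_singleton_self k⟩
      (by simp) m (fun s => some s) (Function.update b k r)
      (by intro s t' u hs ht'
          obtain rfl := Option.some.inj hs
          exact (Option.some.inj ht').symm)
      (by intro s u hs hu
          obtain rfl := Option.some.inj hs
          have hsk : s ≠ k := by simpa using hu
          simp [Function.update_of_ne hsk])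
    simp only [weakCoalitionUtility, Finset.mem_singleton] at h
    simpa [Finset.sum_ite_eq', Function.update_self] using h
  -- payments of confirmed bids of user k agree
  have hpayeq : ∀ t r : ℝ, x m (Function.update b k t) k = 1 →
      x m (Function.update b k r) k = 1 →
      p m (Function.update b k t) k = p m (Function.update b k r) k := by
    intro t r ht hr
    have h1 := hU t r
    have h2 := hU r t
    simp only [weakUtil, ht, hr, if_pos] at h1 h2
    linarith
  by_cases hc : x m b k = 1
  · -- k's truthful bid is confirmed; let π be its payment
    set π := p m b k with hπdef
    have hπle : π ≤ b k := hple m b k hc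
    have hcu : x m (Function.update b k (b k)) k = 1 := by rw [hbb]; exact hc
    by_cases hc' : x m (Function.update b k (b k - Δ)) k = 1
    · -- Case A : the lowered bid is still confirmed, same payment
      have hpe : p m (Function.update b k (b k - Δ)) k = π := by
        have := hpayeq (b k) (b k - Δ) hcu hc'
        rw [hbb] at this; exact this.symm
      constructor
      · have h := hS (b k - Δ) (b k)
        rw [hbb] at h
        rw [weakUtil_conf hc, weakUtil_conf hc', hpe] at h
        linarith
      · have h := hS (b k) (b k - Δ)
        rw [hbb] at h
        rw [weakUtil_conf hc, weakUtil_conf hc', hpe] at h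
        linarith
    · -- Case B : the lowered bid is unconfirmed
      -- the lowered bid is below the threshold payment π
      have hβ'π : b k - Δ ≤ π := by
        by_contra hlt
        push_neg at hlt
        have h := hU (b k - Δ) (b k)
        rw [hbb] at h
        rw [weakUtil_conf hc, weakUtil_unconf hc' le_rfl] at h
        linarith
      constructor
      · -- lower bound
        have h := hS (b k - Δ) (b k)
        rw [hbb] at h
        rw [weakUtil_conf hc, weakUtil_unconf hc' le_rfl] at h
        linarith
      · -- upper bound via ε-argument through the threshold π
        have key : ∀ ε : ℝ, 0 < ε →
            μ m (Function.update b k (b k - Δ)) ≤ μ m b + ε := by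
          intro ε hε
          -- bidding π + ε is confirmed, with payment π
          have hcε : x m (Function.update b k (π + ε)) k = 1 := by
            by_contra hn
            have h := hU (π + ε) (b k)
            rw [hbb] at h
            rw [weakUtil_conf hc, weakUtil_unconf hn le_rfl] at h
            linarith
          have hpε : p m (Function.update b k (π + ε)) k = π := by
            have := hpayeq (b k) (π + ε) hcu hcε
            rw [hbb] at this; exact this.symm
          -- f(β') ≤ f(π)
          have h1 : μ m (Function.update b k (b k - Δ)) ≤ μ m (Function.update b k π) := by
            have h := hS π (b k - Δ)
            rw [weakUtil_unconf hc' hβ'π] at h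
            by_cases hcπ : x m (Function.update b k π) k = 1
            · have hpπ : p m (Function.update b k π) k = π := by
                have := hpayeq (b k) π hcu hcπ
                rw [hbb] at this; exact this.symm
              rw [weakUtil_conf hcπ, hpπ] at h
              linarith
            · rw [weakUtil_unconf hcπ le_rfl] at h
              linarith
          -- f(π) ≤ f(π+ε) + ε
          have h2 : μ m (Function.update b k π) ≤ μ m (Function.update b k (π + ε)) + ε := by
            have h := hS (π + ε) π
            rw [weakUtil_conf hcε, hpε] at h
            by_cases hcπ : x m (Function.update b k π) k = 1
            · have hpπ : p m (Function.update b k π) k = π := by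
                have := hpayeq (π + ε) π hcε hcπ
                rw [hpε] at this; exact this.symm
              rw [weakUtil_conf hcπ, hpπ] at h
              linarith
            · rw [weakUtil_unconf hcπ (by linarith : π ≤ π + ε)] at h
              linarith
          -- f(π+ε) ≤ f(b)
          have h3 : μ m (Function.update b k (π + ε)) ≤ μ m b := by
            have h := hS (b k) (π + ε)
            rw [hbb] at h
            rw [weakUtil_conf hc, weakUtil_conf hcε, hpε] at h
            linarith
          linarith
        by_contra hcon
        push_neg at hcon
        have := key ((μ m (Function.update b k (b k - Δ)) - μ m b) / 2) (by linarith)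
        linarith
  · -- Case C : k's truthful bid is unconfirmed; lowered bid also unconfirmed
    have hc' : ¬ x m (Function.update b k (b k - Δ)) k = 1 := by
      intro h1
      have hp' : p m (Function.update b k (b k - Δ)) k ≤ b k - Δ := by
        have := hple m (Function.update b k (b k - Δ)) k h1
        simpa [Function.update_self] using this
      have h := hU (b k) (b k - Δ)
      rw [hbb] at h
      rw [weakUtil_conf h1, weakUtil_unconf hc le_rfl] at h
      linarith
    constructor
    · have h := hS (b k - Δ) (b k)
      rw [hbb] at h
      rw [weakUtil_unconf' hc, weakUtil_unconf hc' le_rfl] at h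
      have e1 : max (b k - (b k - Δ)) 0 = b k - (b k - Δ) :=
        max_eq_left (by linarith)
      rw [e1] at h
      linarith
    · have h := hS (b k) (b k - Δ)
      rw [hbb] at h
      rw [weakUtil_unconf hc' (by linarith : b k - Δ ≤ b k),
          weakUtil_unconf hc le_rfl] at h
      linarith
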